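/- Let 𝔽 be a field, θ a probability distribution on [k], and f : V_1×⋯×V_k → 𝔽 a multilinear map between finite-dimensional 𝔽-vector spaces. Then ρ^θ(f) ≥ ρ_θ(f), i.e., the logarithmic upper support functional is at least the logarithmic lower support functional. -/

import Mathlib

open scoped BigOperators
open scoped Classical
open scoped ComplexOrder

noncomputable section

namespace CVZ

variable {k : ℕ}

/-- A concrete `k`-tensor over `F` with index types `I i`: the coefficient array
(in the standard bases) of a multilinear map `V₁ × ⋯ × V_k → F` with `dim V_i = |I i|`. -/
abbrev Tensor (F : Type*) (I : Fin k → Type*) : Type _ := (∀ i, I i) → F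

section Basic

variable {F : Type*} [Field F] {I J : Fin k → Type*}
  [∀ i, Fintype (I i)] [∀ i, DecidableEq (I i)]
  [∀ i, Fintype (J i)] [∀ i, DecidableEq (J i)]

/-- Coefficient array of the restriction `f ∘ (A₁, …, A_k)`, where `A_i : W_i → V_i`
is given by the matrix `A i`. -/
def restrictBy (A : ∀ i, Matrix (I i) (J i) F) (t : Tensor F I) : Tensor F J :=
  fun β => ∑ α : ∀ i, I i, (∏ i, A i (α i) (β i)) * t α

/-- `t` restricts to `s`. -/
def Restricts (t : Tensor F I) (s : Tensor F J) : Prop :=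
  ∃ A : ∀ i, Matrix (I i) (J i) F, restrictBy A t = s

/-- A choice of bases of the spaces `V_i`, encoded as a tuple of invertible matrices. -/
def IsBasisTuple (B : ∀ i, Matrix (I i) (I i) F) : Prop := ∀ i, IsUnit (B i)

/-- Support of a tensor (with respect to the standard bases). -/
def supp (t : Tensor F I) : Set (∀ i, I i) := {α | t α ≠ 0}

end Basic

section Entropy

/-- A probability distribution on the finite set `X`. -/
def IsProbDist {X : Type*} [Fintype X] (P : X → ℝ) : Prop :=
  (∀ x, 0 ≤ P x) ∧ ∑ x, P x = 1

/-- Base-2 Shannon entropy. -/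
def H2 {X : Type*} [Fintype X] (P : X → ℝ) : ℝ :=
  ∑ x, -(P x * Real.logb 2 (P x))

variable {I : Fin k → Type*} [∀ i, Fintype (I i)] [∀ i, DecidableEq (I i)]

/-- The `i`-th marginal of a distribution on a product set. -/
def marg (P : (∀ i, I i) → ℝ) (i : Fin k) : I i → ℝ :=
  fun a => ∑ α : ∀ i, I i, if α i = a then P α else 0

/-- `H_θ(P)`, the `θ`-weighted average of the marginal entropies. -/
def Hw (θ : Fin k → ℝ) (P : (∀ i, I i) → ℝ) : ℝ :=
  ∑ i, θ i * H2 (marg P i)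

/-- `H_θ(Φ)`, the supremum of `H_θ(P)` over distributions `P` supported on `Φ`. -/
def HwSet (θ : Fin k → ℝ) (Φ : Set (∀ i, I i)) : ℝ :=
  sSup {h | ∃ P : (∀ i, I i) → ℝ, IsProbDist P ∧ (∀ α, P α ≠ 0 → α ∈ Φ) ∧ h = Hw θ P}

/-- Maximal points of a subset of the product order. -/
def maxPoints [∀ i, LinearOrder (I i)] (Φ : Set (∀ i, I i)) : Set (∀ i, I i) :=
  {α | α ∈ Φ ∧ ∀ β ∈ Φ, ¬ α < β}

end Entropy

section SuppFunc

variable {F : Type*} [Field F] {I : Fin k → Type*} [∀ i, Fintype (I i)] [∀ i, DecidableEq (I i)]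

/-- The logarithmic Strassen upper support functional `ρ^θ`. -/
def rhoUpper (θ : Fin k → ℝ) (t : Tensor F I) : ℝ :=
  sInf {h | ∃ B : ∀ i, Matrix (I i) (I i) F, IsBasisTuple B ∧
    h = HwSet θ (supp (restrictBy B t))}

/-- The Strassen upper support functional `ζ^θ`. -/
def zetaUpper (θ : Fin k → ℝ) (t : Tensor F I) : ℝ :=
  if t = 0 then 0 else (2 : ℝ) ^ rhoUpper θ t

/-- The logarithmic Strassen lower support functional `ρ_θ`. -/
def rhoLower [∀ i, LinearOrder (I i)] (θ : Fin k → ℝ) (t : Tensor F I) : ℝ :=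
  sSup {h | ∃ B : ∀ i, Matrix (I i) (I i) F, IsBasisTuple B ∧
    h = HwSet θ (maxPoints (supp (restrictBy B t)))}

/-- The Strassen lower support functional `ζ_θ`. -/
def zetaLower [∀ i, LinearOrder (I i)] (θ : Fin k → ℝ) (t : Tensor F I) : ℝ :=
  if t = 0 then 0 else (2 : ℝ) ^ rhoLower θ t

/-- The instability of a tensor. -/
def instab (t : Tensor F I) : ℝ :=
  sSup {ε : ℝ | 0 ≤ ε ∧ ∃ B : ∀ i, Matrix (I i) (I i) F, IsBasisTuple B ∧
    ∃ w : ∀ i, I i → ℝ, (∀ i x, 0 ≤ w i x) ∧ (∀ i, ∃ x, w i x ≠ 0) ∧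
      ∀ a ∈ supp (restrictBy B t), ∑ i, w i (a i) ≤
        ∑ i, ((∑ x : I i, w i x) / (Fintype.card (I i) : ℝ) - ε * ⨆ x : I i, w i x)}

end SuppFunc

section Ops

variable {F : Type*} [Field F]

/-- The unit tensor `⟨r⟩`. -/
def unitTensor (F : Type*) [Field F] (k r : ℕ) : Tensor F (fun _ : Fin k => Fin r) :=
  fun α => if ∀ i j : Fin k, α i = α j then 1 else 0

variable {n m : Fin k → ℕ}

/-- Direct sum of two tensors, with the concatenated (naturally ordered) bases. -/
def dirSumFin (s : Tensor F fun i => Fin (n i)) (t : Tensor F fun i => Fin (m i)) :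
    Tensor F fun i => Fin (n i + m i) :=
  fun α =>
    (if h : ∀ i, (α i : ℕ) < n i then s (fun i => ⟨(α i : ℕ), h i⟩) else 0) +
    (if h : ∀ i, n i ≤ (α i : ℕ) then
      t (fun i => ⟨(α i : ℕ) - n i, by have h1 := (α i).isLt; have h2 := h i; omega⟩) else 0)

/-- Tensor (Kronecker) product of two tensors, with the product bases ordered naturally. -/
def tensMulFin (s : Tensor F fun i => Fin (n i)) (t : Tensor F fun i => Fin (m i)) :
    Tensor F fun i => Fin (n i * m i) :=
  fun α =>
    s (fun i => ⟨(α i : ℕ) / m i, by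
      have h := (α i).isLt
      exact Nat.div_lt_of_lt_mul (lt_of_lt_of_le h (Nat.mul_comm (n i) (m i)).le)⟩) *
    t (fun i => ⟨(α i : ℕ) % m i, by
      have h := (α i).isLt
      have hpos : 0 < n i * m i := Nat.lt_of_le_of_lt (Nat.zero_le _) h
      have hm : 0 < m i := by
        rcases Nat.eq_zero_or_pos (m i) with h0 | h0
        · simp [h0] at hpos
        · exact h0
      exact Nat.mod_lt _ hm⟩)

/-- The `N`-th tensor power of a tensor (grouping the legs into `k` groups). -/
def tpow {I : Fin k → Type*} (t : Tensor F I) (N : ℕ) : Tensor F fun i => Fin N → I i :=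
  fun α => ∏ j : Fin N, t fun i => α i j

end Ops

section Subrank

variable {F : Type*} [Field F] {I : Fin k → Type*} [∀ i, Fintype (I i)] [∀ i, DecidableEq (I i)]

/-- The subrank `Q(t)` of a tensor: the largest `r` with `⟨r⟩ ≤ t`. -/
def Qtensor (t : Tensor F I) : ℕ :=
  sSup {r : ℕ | Restricts t (unitTensor F k r)}

/-- A slice: a tensor of the form `v ⊗ w` with `v` in the `j`-th leg. -/
def IsSlice (s : Tensor F I) : Prop :=
  ∃ (j : Fin k) (v : I j → F) (w : (∀ i : {i : Fin k // i ≠ j}, I i.1) → F),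
    ∀ α, s α = v (α j) * w (fun i => α i.1)

/-- The slice rank of a tensor. -/
def sliceRank (t : Tensor F I) : ℕ :=
  sInf {r : ℕ | ∃ c : Fin r → Tensor F I, (∀ a, IsSlice (c a)) ∧ t = ∑ a, c a}

end Subrank

section Combinatorial

variable {I : Fin k → Type*}

/-- A diagonal: any two distinct elements differ in all coordinates. -/
def IsDiagonal (D : Set (∀ i, I i)) : Prop :=
  ∀ a ∈ D, ∀ b ∈ D, a ≠ b → ∀ i, a i ≠ b i

/-- The `i`-th projection of a set of tuples. -/
def projSet (D : Set (∀ i, I i)) (i : Fin k) : Set (I i) := {x | ∃ a ∈ D, a i = x}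

/-- A free diagonal in `Φ`: a diagonal `D` with `D = Φ ∩ (D₁ × ⋯ × D_k)`. -/
def IsFreeDiagonal (D Φ : Set (∀ i, I i)) : Prop :=
  IsDiagonal D ∧ D = Φ ∩ {a | ∀ i, a i ∈ projSet D i}

/-- The (combinatorial) subrank of a set: the maximal size of a free diagonal. -/
def Qset (Φ : Set (∀ i, I i)) : ℕ :=
  sSup {r : ℕ | ∃ D : Set (∀ i, I i), IsFreeDiagonal D Φ ∧ D.ncard = r}

/-- The `N`-fold coordinatewise power of a set of tuples. -/
def setPow (Φ : Set (∀ i, I i)) (N : ℕ) : Set (∀ i, Fin N → I i) :=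
  {α | ∀ j : Fin N, (fun i => α i j) ∈ Φ}

/-- A tight set. -/
def TightSet (Φ : Set (∀ i, I i)) : Prop :=
  ∃ u : ∀ i, I i → ℤ, (∀ i, Function.Injective (u i)) ∧ ∀ α ∈ Φ, ∑ i, u i (α i) = 0

/-- `Φ` is a combinatorial degeneration of `Ψ` (written `Ψ ⊵ Φ`). -/
def CombDegen (Ψ Φ : Set (∀ i, I i)) : Prop :=
  Φ ⊆ Ψ ∧ ∃ u : ∀ i, I i → ℤ,
    (∀ α ∈ Φ, ∑ i, u i (α i) = 0) ∧ ∀ α ∈ Ψ, α ∉ Φ → 0 < ∑ i, u i (α i)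

end Combinatorial

/-- A tight tensor: some basis tuple gives a tight support. -/
def TightTensor {F : Type*} [Field F] {I : Fin k → Type*} [∀ i, Fintype (I i)]
    [∀ i, DecidableEq (I i)] (t : Tensor F I) : Prop :=
  ∃ B : ∀ i, Matrix (I i) (I i) F, IsBasisTuple B ∧ TightSet (supp (restrictBy B t))

/-- A complete (decreasing) flag of subspaces, `W 0 = ⊤` and `dim (W j) = dim V − j`. -/
def IsCompleteFlag (F : Type*) [Field F] {V : Type*} [AddCommGroup V] [Module F V]
    (W : ℕ → Submodule F V) : Prop :=
  Antitone W ∧ W 0 = ⊤ ∧ ∀ j : ℕ, Module.finrank F (W j) = Module.finrank F V - j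

/-- Evaluation of (the multilinear map associated with) `t` at a tuple of vectors. -/
def eval {F : Type*} [Field F] {I : Fin k → Type*} [∀ i, Fintype (I i)] [∀ i, DecidableEq (I i)]
    (t : Tensor F I) (v : ∀ i, I i → F) : F :=
  ∑ α : ∀ i, I i, (∏ i, v i (α i)) * t α

/-- The support of `t` with respect to a tuple of complete flags. -/
def suppFlag {F : Type*} [Field F] {n : Fin k → ℕ} (t : Tensor F fun i => Fin (n i))
    (W : ∀ i, ℕ → Submodule F (Fin (n i) → F)) : Set (∀ i, Fin (n i)) :=
  {α | ∃ v : ∀ i, Fin (n i) → F, (∀ i, v i ∈ W i (α i : ℕ)) ∧ eval t v ≠ 0}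

section Quantum

variable {I : Fin k → Type*} [∀ i, Fintype (I i)] [∀ i, DecidableEq (I i)]

/-- Von Neumann entropy (base 2) of a Hermitian matrix. -/
def vnEntropy {d : Type*} [Fintype d] [DecidableEq d] (ρ : Matrix d d ℂ) : ℝ :=
  if h : ρ.IsHermitian then ∑ x, -(h.eigenvalues x * Real.logb 2 (h.eigenvalues x)) else 0

/-- The `j`-th marginal (reduced density matrix) of the pure state `|t⟩⟨t| / ⟨t|t⟩`. -/
def margMat (t : Tensor ℂ I) (j : Fin k) : Matrix (I j) (I j) ℂ :=
  fun a b =>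
    (∑ α : ∀ i, I i, ∑ β : ∀ i, I i,
      if α j = a ∧ β j = b ∧ (∀ i, i ≠ j → α i = β i) then t α * star (t β) else 0) /
    ∑ α : ∀ i, I i, t α * star (t α)

/-- The logarithmic lower quantum functional `E_θ` for `θ` a distribution on `[k]`. -/
def Ewq (θ : Fin k → ℝ) (t : Tensor ℂ I) : ℝ :=
  sSup {h | ∃ A : ∀ i, Matrix (I i) (I i) ℂ, IsBasisTuple A ∧
    h = ∑ j, θ j * vnEntropy (margMat (restrictBy A t) j)}

/-- The marginal (reduced density matrix) on the legs in `S` of the pure state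
`|t⟩⟨t| / ⟨t|t⟩`. -/
def margMatSet (t : Tensor ℂ I) (S : Finset (Fin k)) :
    Matrix (∀ i : {x : Fin k // x ∈ S}, I i.1) (∀ i : {x : Fin k // x ∈ S}, I i.1) ℂ :=
  fun a b =>
    (∑ α : ∀ i, I i, ∑ β : ∀ i, I i,
      if (∀ (i : Fin k) (hi : i ∈ S), α i = a ⟨i, hi⟩ ∧ β i = b ⟨i, hi⟩) ∧
         (∀ i, i ∉ S → α i = β i)
      then t α * star (t β) else 0) /
    ∑ α : ∀ i, I i, t α * star (t α)

/-- A probability distribution on the bipartitions `{S, S̄}` of `[k]` (encoded by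
choosing a representative `S` for each bipartition occurring in the support). -/
def IsBipDist (θ : Finset (Fin k) → ℝ) : Prop :=
  (∀ S, 0 ≤ θ S) ∧ (∀ S, θ S ≠ 0 → S.Nonempty ∧ Sᶜ.Nonempty) ∧
    ∑ S : Finset (Fin k), θ S = 1

/-- The logarithmic lower quantum functional `E_θ` for `θ` a distribution on bipartitions. -/
def EwqBip (θ : Finset (Fin k) → ℝ) (t : Tensor ℂ I) : ℝ :=
  sSup {h | ∃ A : ∀ i, Matrix (I i) (I i) ℂ, IsBasisTuple A ∧
    h = ∑ S : Finset (Fin k), θ S * vnEntropy (margMatSet (restrictBy A t) S)}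

/-- The lower quantum functional `F_θ`. -/
def FwqBip (θ : Finset (Fin k) → ℝ) (t : Tensor ℂ I) : ℝ :=
  if t = 0 then 0 else (2 : ℝ) ^ EwqBip θ t

/-- Degeneration: `t` lies in the closure of the `GL × ⋯ × GL`-orbit of `s`. -/
def Degen (s t : Tensor ℂ I) : Prop :=
  t ∈ closure {u : Tensor ℂ I | ∃ A : ∀ i, Matrix (I i) (I i) ℂ,
    IsBasisTuple A ∧ restrictBy A s = u}

end Quantum

/-- Trace norm of a complex matrix: `Tr √(AᴴA)`. -/
def traceNorm {d : Type*} [Fintype d] [DecidableEq d] (A : Matrix d d ℂ) : ℝ :=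
  (((Matrix.posSemidef_conjTranspose_mul_self A).1.eigenvectorUnitary.1 *
      Matrix.diagonal (((↑) : ℝ → ℂ) ∘ Real.sqrt ∘ (Matrix.posSemidef_conjTranspose_mul_self A).1.eigenvalues) *
      (star (Matrix.posSemidef_conjTranspose_mul_self A).1.eigenvectorUnitary : Matrix d d ℂ)).trace).re

/-- `conjIter ρ X j = X_j ⋯ X_2 X_1 ρ X_1 X_2 ⋯ X_j`. -/
def conjIter {d : Type*} [Fintype d] (ρ : Matrix d d ℂ) {n : ℕ}
    (X : Fin n → Matrix d d ℂ) : ℕ → Matrix d d ℂ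
  | 0 => ρ
  | (j + 1) => if h : j < n then X ⟨j, h⟩ * conjIter ρ X j * X ⟨j, h⟩ else conjIter ρ X j

/-- A tricolored sum-free set in `G × G × G`. -/
def IsTriColoredSumFree {G : Type*} [AddCommGroup G] (Γ : Set (G × G × G)) : Prop :=
  (∀ a ∈ Γ, ∀ b ∈ Γ, a ≠ b → a.1 ≠ b.1 ∧ a.2.1 ≠ b.2.1 ∧ a.2.2 ≠ b.2.2) ∧
  ∀ x y z : G, (∃ a ∈ Γ, a.1 = x) → (∃ a ∈ Γ, a.2.1 = y) → (∃ a ∈ Γ, a.2.2 = z) →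
    (x + y + z = 0 ↔ (x, y, z) ∈ Γ)

/-- The maximal size `s₃(G)` of a tricolored sum-free set in `G × G × G`. -/
def s3 (G : Type*) [AddCommGroup G] : ℕ :=
  sSup {r : ℕ | ∃ Γ : Set (G × G × G), IsTriColoredSumFree Γ ∧ Γ.ncard = r}

/-- Binary entropy function (base 2), with the convention `0 · log 0 = 0`. -/
def binH (p : ℝ) : ℝ := -(p * Real.logb 2 p) - (1 - p) * Real.logb 2 (1 - p)

open Filter Topology

section Statement4Aux

/-! ### Auxiliary entropy lemmas (natural logarithm) -/

/-- Natural-log entropy sum. -/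
noncomputable def HN {ι : Type*} [Fintype ι] (R : ι → ℝ) : ℝ := ∑ b, Real.negMulLog (R b)

lemma H2_eq_HN {ι : Type*} [Fintype ι] (R : ι → ℝ) : H2 R = HN R / Real.log 2 := by
  unfold H2 HN
  rw [Finset.sum_div]
  refine Finset.sum_congr rfl fun b _ => ?_
  rw [Real.negMulLog, Real.logb]
  ring

lemma HN_nonneg {ι : Type*} [Fintype ι] {R : ι → ℝ} (h0 : ∀ b, 0 ≤ R b) (h1 : ∀ b, R b ≤ 1) :
    0 ≤ HN R :=
  Finset.sum_nonneg fun b _ => Real.negMulLog_nonneg (h0 b) (h1 b)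

lemma negMulLog_le_exp_inv {x : ℝ} (hx : 0 ≤ x) : Real.negMulLog x ≤ (Real.exp 1)⁻¹ := by
  rcases eq_or_lt_of_le hx with h | h
  · rw [← h, Real.negMulLog_zero]
    positivity
  · set y := -Real.log x with hy
    have hxy : x = Real.exp (-y) := by rw [hy, neg_neg, Real.exp_log h]
    have hrw : Real.negMulLog x = y * Real.exp (-y) := by
      rw [← hxy, Real.negMulLog, hy]; ring
    rw [hrw]
    rcases le_or_gt y 0 with hy0 | hy0
    · have h1 : y * Real.exp (-y) ≤ 0 := mul_nonpos_of_nonpos_of_nonneg hy0 (Real.exp_pos _).le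
      exact h1.trans (by positivity)
    · have h1 : y ≤ Real.exp (y - 1) := by
        have := Real.add_one_le_exp (y - 1)
        linarith
      calc y * Real.exp (-y) ≤ Real.exp (y - 1) * Real.exp (-y) :=
            mul_le_mul_of_nonneg_right h1 (Real.exp_pos _).le
        _ = (Real.exp 1)⁻¹ := by
            rw [← Real.exp_add, ← Real.exp_neg]
            ring_nf

lemma HN_le_card {ι : Type*} [Fintype ι] {R : ι → ℝ} (h0 : ∀ b, 0 ≤ R b) :
    HN R ≤ (Fintype.card ι : ℝ) * (Real.exp 1)⁻¹ := by
  unfold HN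
  calc ∑ b, Real.negMulLog (R b) ≤ ∑ _b : ι, (Real.exp 1)⁻¹ :=
        Finset.sum_le_sum fun b _ => negMulLog_le_exp_inv (h0 b)
    _ = (Fintype.card ι : ℝ) * (Real.exp 1)⁻¹ := by
        rw [Finset.sum_const, Finset.card_univ, nsmul_eq_mul]

/-- Gibbs' inequality with a sub-probability reference measure. -/
lemma gibbs_ineq {ι : Type*} [Fintype ι] {R q : ι → ℝ} (hR0 : ∀ b, 0 ≤ R b)
    (hR1 : ∑ b, R b = 1) (hq0 : ∀ b, 0 ≤ q b) (hq1 : ∑ b, q b ≤ 1)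
    (hpos : ∀ b, R b ≠ 0 → 0 < q b) :
    HN R ≤ ∑ b, R b * (-Real.log (q b)) := by
  have key : ∀ b, Real.negMulLog (R b) - R b * (-Real.log (q b)) ≤ q b - R b := by
    intro b
    rcases eq_or_lt_of_le (hR0 b) with h | h
    · rw [← h, Real.negMulLog_zero]
      simpa using hq0 b
    · have hq := hpos b h.ne'
      have hrw : Real.negMulLog (R b) - R b * (-Real.log (q b)) = R b * Real.log (q b / R b) := by
        rw [Real.log_div hq.ne' h.ne', Real.negMulLog]; ring
      rw [hrw]
      calc R b * Real.log (q b / R b) ≤ R b * (q b / R b - 1) :=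
            mul_le_mul_of_nonneg_left (Real.log_le_sub_one_of_pos (by positivity)) (hR0 b)
        _ = q b - R b := by field_simp
  have hsum := Finset.sum_le_sum (fun b (_ : b ∈ Finset.univ) => key b)
  rw [Finset.sum_sub_distrib, Finset.sum_sub_distrib, hR1] at hsum
  unfold HN
  linarith

lemma sum_ite_one_mul {ι : Type*} [Fintype ι] [DecidableEq ι] (c : ι) (w : ι → ℝ) :
    ∑ b, (if c = b then (1 : ℝ) else 0) * w b = w c := by
  rw [Finset.sum_congr rfl (fun b _ => by rw [ite_mul, one_mul, zero_mul]),
    Finset.sum_ite_eq Finset.univ c w]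
  simp

lemma sum_ite_one {ι : Type*} [Fintype ι] [DecidableEq ι] (c : ι) :
    ∑ b, (if c = b then (1 : ℝ) else 0) = 1 := by
  rw [Finset.sum_ite_eq Finset.univ c (fun _ => (1 : ℝ))]
  simp

/-- Key mixture bound: mixing in a point mass at `c` costs at most `σ · log(mixture at c)`. -/
lemma mix_HN {ι : Type*} [Fintype ι] [DecidableEq ι] {R : ι → ℝ} (hR0 : ∀ b, 0 ≤ R b)
    (hR1 : ∑ b, R b = 1) (c : ι) {σ : ℝ} (hσ0 : 0 < σ) (hσ1 : σ < 1) :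
    (1 - σ) * HN R + σ * (-Real.log ((1 - σ) * R c + σ)) ≤
      HN (fun b => (1 - σ) * R b + σ * (if c = b then 1 else 0)) := by
  set z : ι → ℝ := fun b => (1 - σ) * R b + σ * (if c = b then 1 else 0) with hz
  have hz0 : ∀ b, 0 ≤ z b := by
    intro b
    have := hR0 b
    dsimp [z]; split <;> nlinarith
  have hz1 : ∑ b, z b = 1 := by
    dsimp [z]
    rw [Finset.sum_add_distrib, ← Finset.mul_sum, ← Finset.mul_sum, hR1, sum_ite_one c]
    ring
  have hzpos : ∀ b, R b ≠ 0 → 0 < z b := by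
    intro b hb
    have h : 0 < R b := lt_of_le_of_ne (hR0 b) (Ne.symm hb)
    dsimp [z]; split <;> nlinarith
  have hcross : HN R ≤ ∑ b, R b * (-Real.log (z b)) := gibbs_ineq hR0 hR1 hz0 hz1.le hzpos
  have hzc : z c = (1 - σ) * R c + σ := by simp [z]
  have expand : HN z = (1 - σ) * (∑ b, R b * (-Real.log (z b))) + σ * (-Real.log (z c)) := by
    unfold HN
    have hterm : ∀ b, Real.negMulLog (z b) =
        (1 - σ) * (R b * (-Real.log (z b))) + σ * ((if c = b then (1:ℝ) else 0) * (-Real.log (z b))) := by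
      intro b
      rw [Real.negMulLog]
      dsimp [z]
      ring
    rw [Finset.sum_congr rfl fun b _ => hterm b, Finset.sum_add_distrib, ← Finset.mul_sum,
      ← Finset.mul_sum, sum_ite_one_mul c (fun b => -Real.log (z b))]
  have h1σ : (0:ℝ) ≤ 1 - σ := by linarith
  calc (1 - σ) * HN R + σ * (-Real.log ((1 - σ) * R c + σ))
      ≤ (1 - σ) * (∑ b, R b * (-Real.log (z b))) + σ * (-Real.log (z c)) := by
        rw [hzc]
        exact add_le_add_left (mul_le_mul_of_nonneg_left hcross h1σ) _
    _ = HN z := expand.symm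

/-! ### Marginal bookkeeping -/

section MargLemmas

variable {I : Fin k → Type*} [∀ i, Fintype (I i)] [∀ i, DecidableEq (I i)]

lemma marg_nonneg {P : (∀ i, I i) → ℝ} (hP : ∀ α, 0 ≤ P α) (i : Fin k) (a : I i) :
    0 ≤ marg P i a :=
  Finset.sum_nonneg fun α _ => by by_cases h : α i = a <;> simp [h, hP α]

lemma marg_sum {P : (∀ i, I i) → ℝ} (i : Fin k) : ∑ a, marg P i a = ∑ α, P α := by
  unfold marg
  rw [Finset.sum_comm]
  refine Finset.sum_congr rfl fun α _ => ?_
  rw [Finset.sum_ite_eq Finset.univ (α i) (fun _ => P α)]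
  simp

lemma marg_le_one {P : (∀ i, I i) → ℝ} (hP : IsProbDist P) (i : Fin k) (a : I i) :
    marg P i a ≤ 1 := by
  have h1 : marg P i a ≤ ∑ α, P α := by
    refine Finset.sum_le_sum fun α _ => ?_
    by_cases h : α i = a <;> simp [h, hP.1 α]
  rw [hP.2] at h1
  exact h1

lemma marg_isProbDist {P : (∀ i, I i) → ℝ} (hP : IsProbDist P) (i : Fin k) :
    (∀ a, 0 ≤ marg P i a) ∧ ∑ a, marg P i a = 1 :=
  ⟨marg_nonneg hP.1 i, by rw [marg_sum, hP.2]⟩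

lemma marg_weight {P : (∀ i, I i) → ℝ} (i : Fin k) (w : I i → ℝ) :
    ∑ a, marg P i a * w a = ∑ α, P α * w (α i) := by
  unfold marg
  rw [Finset.sum_congr rfl fun a (_ : a ∈ Finset.univ) =>
    Finset.sum_mul (Finset.univ) (fun α => if α i = a then P α else 0) (w a), Finset.sum_comm]
  refine Finset.sum_congr rfl fun α _ => ?_
  rw [Finset.sum_congr rfl (fun a (_ : a ∈ Finset.univ) => by
    rw [ite_mul, zero_mul] : ∀ a ∈ Finset.univ, (if α i = a then P α else 0) * w a
      = if α i = a then P α * w a else 0),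
    Finset.sum_ite_eq Finset.univ (α i) (fun a => P α * w a)]
  simp

lemma marg_ne_zero {P : (∀ i, I i) → ℝ} {i : Fin k} {a : I i} (h : marg P i a ≠ 0) :
    ∃ α, P α ≠ 0 ∧ α i = a := by
  by_contra hc
  push_neg at hc
  apply h
  unfold marg
  refine Finset.sum_eq_zero fun α _ => ?_
  by_cases hα : α i = a
  · rcases eq_or_ne (P α) 0 with h0 | h0
    · simp [hα, h0]
    · exact absurd hα (hc α h0)
  · simp [hα]

lemma marg_mix {P Q : (∀ i, I i) → ℝ} (x y : ℝ) (i : Fin k) (a : I i) :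
    marg (fun α => x * P α + y * Q α) i a = x * marg P i a + y * marg Q i a := by
  unfold marg
  rw [Finset.mul_sum, Finset.mul_sum, ← Finset.sum_add_distrib]
  refine Finset.sum_congr rfl fun α _ => ?_
  by_cases h : α i = a <;> simp [h]

lemma marg_point (γ : ∀ i, I i) (i : Fin k) (a : I i) :
    marg (fun α => if α = γ then (1:ℝ) else 0) i a = if γ i = a then 1 else 0 := by
  unfold marg
  rw [Finset.sum_eq_single γ]
  · simp
  · intro α _ hα
    simp [hα]
  · intro h
    exact absurd (Finset.mem_univ γ) h

lemma Hw_eq_HN (θ : Fin k → ℝ) (Q : (∀ i, I i) → ℝ) :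
    Hw θ Q = (∑ i, θ i * HN (marg Q i)) / Real.log 2 := by
  unfold Hw
  rw [Finset.sum_div]
  refine Finset.sum_congr rfl fun i _ => ?_
  rw [H2_eq_HN, mul_div_assoc]

lemma Hw_nonneg {θ : Fin k → ℝ} (hθ : ∀ i, 0 ≤ θ i) {Q : (∀ i, I i) → ℝ}
    (hQ : IsProbDist Q) : 0 ≤ Hw θ Q := by
  unfold Hw
  refine Finset.sum_nonneg fun i _ => mul_nonneg (hθ i) ?_
  rw [H2_eq_HN]
  exact div_nonneg (HN_nonneg (marg_nonneg hQ.1 i) (marg_le_one hQ i)) (Real.log_nonneg (by norm_num))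

end MargLemmas

/-! ### Flags from an invertible matrix and relative position -/

section FlagLemmas

variable {F : Type*} [Field F] {N : ℕ}

/-- Flag from a matrix: vectors whose image has zero coordinates below `b`. -/
noncomputable def Vflag (B : Matrix (Fin N) (Fin N) F) (b : ℕ) : Submodule F (Fin N → F) :=
  ⨅ (c : Fin N) (_ : (c : ℕ) < b), LinearMap.ker ((LinearMap.proj c).comp B.mulVecLin)

/-- Coordinate flag along an enumeration `σ`. -/
noncomputable def Sflag (σ : Equiv.Perm (Fin N)) (m : ℕ) : Submodule F (Fin N → F) :=
  ⨅ (j : Fin N) (_ : (j : ℕ) < m),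
    LinearMap.ker (LinearMap.proj (σ j) : (Fin N → F) →ₗ[F] F)

lemma mem_Vflag {B : Matrix (Fin N) (Fin N) F} {b : ℕ} {x : Fin N → F} :
    x ∈ Vflag B b ↔ ∀ c : Fin N, (c : ℕ) < b → B.mulVec x c = 0 := by
  simp [Vflag, Submodule.mem_iInf, LinearMap.mem_ker, Matrix.mulVecLin_apply]

lemma mem_Sflag {σ : Equiv.Perm (Fin N)} {m : ℕ} {x : Fin N → F} :
    x ∈ Sflag σ m ↔ ∀ j : Fin N, (j : ℕ) < m → x (σ j) = 0 := by
  simp [Sflag, Submodule.mem_iInf, LinearMap.mem_ker]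

lemma Vflag_anti {B : Matrix (Fin N) (Fin N) F} {b b' : ℕ} (h : b ≤ b') :
    Vflag B b' ≤ Vflag B b := fun x hx =>
  mem_Vflag.2 fun c hc => mem_Vflag.1 hx c (lt_of_lt_of_le hc h)

lemma Sflag_anti {σ : Equiv.Perm (Fin N)} {m m' : ℕ} (h : m ≤ m') :
    Sflag (F := F) σ m' ≤ Sflag σ m := fun x hx =>
  mem_Sflag.2 fun j hj => mem_Sflag.1 hx j (lt_of_lt_of_le hj h)

lemma Sflag_zero (σ : Equiv.Perm (Fin N)) : Sflag (F := F) σ 0 = ⊤ := by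
  rw [eq_top_iff]
  exact fun x _ => mem_Sflag.2 fun j hj => absurd hj (Nat.not_lt_zero _)

lemma Sflag_eq_bot {σ : Equiv.Perm (Fin N)} {m : ℕ} (h : N ≤ m) : Sflag (F := F) σ m = ⊥ := by
  rw [eq_bot_iff]
  intro x hx
  have : x = 0 := by
    funext c
    have := mem_Sflag.1 hx (σ.symm c) (lt_of_lt_of_le (σ.symm c).isLt h)
    rwa [Equiv.apply_symm_apply] at this
  simp [this]

lemma Sflag_succ {σ : Equiv.Perm (Fin N)} {m : ℕ} (hm : m < N) :
    Sflag (F := F) σ (m + 1) =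
      Sflag σ m ⊓ LinearMap.ker (LinearMap.proj (σ ⟨m, hm⟩) : (Fin N → F) →ₗ[F] F) := by
  apply le_antisymm
  · refine le_inf (Sflag_anti (Nat.le_succ m)) ?_
    intro x hx
    rw [LinearMap.mem_ker, LinearMap.proj_apply]
    exact mem_Sflag.1 hx ⟨m, hm⟩ (Nat.lt_succ_self m)
  · intro x hx
    rw [Submodule.mem_inf] at hx
    refine mem_Sflag.2 fun j hj => ?_
    rcases Nat.lt_succ_iff_lt_or_eq.1 hj with h | h
    · exact mem_Sflag.1 hx.1 j h
    · have : j = ⟨m, hm⟩ := Fin.ext h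
      rw [this]
      simpa [LinearMap.proj_apply] using hx.2

lemma exists_Vflag_notin {B : Matrix (Fin N) (Fin N) F} (hB : IsUnit B) {b : ℕ} (hb : b < N) :
    ∃ x, x ∈ Vflag B b ∧ x ∉ Vflag B (b + 1) := by
  refine ⟨B⁻¹.mulVec (Pi.single ⟨b, hb⟩ 1), ?_, ?_⟩
  · refine mem_Vflag.2 fun c hc => ?_
    rw [Matrix.mulVec_mulVec, Matrix.mul_nonsing_inv _ ((Matrix.isUnit_iff_isUnit_det B).1 hB),
      Matrix.one_mulVec]
    exact Pi.single_eq_of_ne (by intro h; rw [h] at hc; exact absurd hc (lt_irrefl b)) 1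
  · intro hmem
    have := mem_Vflag.1 hmem ⟨b, hb⟩ (Nat.lt_succ_self b)
    rw [Matrix.mulVec_mulVec, Matrix.mul_nonsing_inv _ ((Matrix.isUnit_iff_isUnit_det B).1 hB),
      Matrix.one_mulVec, Pi.single_eq_same] at this
    exact one_ne_zero this

lemma finrank_le_inf_ker_add_one {E : Type*} [AddCommGroup E] [Module F E]
    [FiniteDimensional F E] (U : Submodule F E) (φ : E →ₗ[F] F) :
    Module.finrank F U ≤ Module.finrank F ↥(U ⊓ LinearMap.ker φ) + 1 := by
  have h1 := Submodule.finrank_sup_add_finrank_inf_eq U (LinearMap.ker φ)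
  have h2 : Module.finrank F ↥(U ⊔ LinearMap.ker φ) ≤ Module.finrank F E :=
    Submodule.finrank_le _
  have h3 := LinearMap.finrank_range_add_finrank_ker φ
  have h4 : Module.finrank F ↥(LinearMap.range φ) ≤ 1 := by
    have h5 : Module.finrank F ↥(LinearMap.range φ) ≤ Module.finrank F F :=
      Submodule.finrank_le _
    simpa [Module.finrank_self] using h5
  omega

lemma finrank_inf_supermod {E : Type*} [AddCommGroup E] [Module F E] [FiniteDimensional F E]
    {P P' T T' : Submodule F E} (hP : P' ≤ P) (hT : T' ≤ T) :
    Module.finrank F ↥(P ⊓ T') + Module.finrank F ↥(P' ⊓ T) ≤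
      Module.finrank F ↥(P ⊓ T) + Module.finrank F ↥(P' ⊓ T') := by
  have key := Submodule.finrank_sup_add_finrank_inf_eq (P' ⊓ T) (P ⊓ T')
  have h1 : (P' ⊓ T) ⊓ (P ⊓ T') = P' ⊓ T' :=
    le_antisymm
      (le_inf (inf_le_left.trans inf_le_left) (inf_le_right.trans inf_le_right))
      (le_inf (le_inf inf_le_left (inf_le_right.trans hT))
        (le_inf (inf_le_left.trans hP) inf_le_right))
  have h2 : (P' ⊓ T) ⊔ (P ⊓ T') ≤ P ⊓ T :=
    sup_le (le_inf (inf_le_left.trans hP) inf_le_right)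
      (le_inf inf_le_left (inf_le_right.trans hT))
  have h3 : Module.finrank F ↥((P' ⊓ T) ⊔ (P ⊓ T')) ≤ Module.finrank F ↥(P ⊓ T) :=
    Submodule.finrank_mono h2
  rw [h1] at key
  omega

/-- The relative position of the two flags. -/
noncomputable def mrel (B : Matrix (Fin N) (Fin N) F) (σ : Equiv.Perm (Fin N)) (b : ℕ) : ℕ :=
  Nat.findGreatest (fun m => ¬ (Vflag B b ⊓ Sflag σ m ≤ Vflag B (b + 1))) (N - 1)

lemma mrel_le (B : Matrix (Fin N) (Fin N) F) (σ : Equiv.Perm (Fin N)) (b : ℕ) :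
    mrel B σ b ≤ N - 1 :=
  Nat.findGreatest_le _

lemma mrel_lt (B : Matrix (Fin N) (Fin N) F) (σ : Equiv.Perm (Fin N)) (b : ℕ) (hN : 0 < N) :
    mrel B σ b < N :=
  lt_of_le_of_lt (mrel_le B σ b) (by omega)

lemma mrel_spec {B : Matrix (Fin N) (Fin N) F} (hB : IsUnit B) (σ : Equiv.Perm (Fin N))
    {b : ℕ} (hb : b < N) :
    ¬ (Vflag B b ⊓ Sflag σ (mrel B σ b) ≤ Vflag B (b + 1)) := by
  have hP0 : ¬ (Vflag B b ⊓ Sflag σ 0 ≤ Vflag B (b + 1)) := by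
    rw [Sflag_zero, inf_top_eq]
    obtain ⟨x, hx1, hx2⟩ := exists_Vflag_notin hB hb
    exact fun hle => hx2 (hle hx1)
  exact Nat.findGreatest_spec
    (P := fun m => ¬ (Vflag B b ⊓ Sflag σ m ≤ Vflag B (b + 1))) (Nat.zero_le _) hP0

lemma mrel_max {B : Matrix (Fin N) (Fin N) F} (σ : Equiv.Perm (Fin N)) {b m : ℕ}
    (hm : mrel B σ b < m) :
    Vflag B b ⊓ Sflag σ m ≤ Vflag B (b + 1) := by
  rcases le_or_gt m (N - 1) with h | h
  · by_contra hc
    exact Nat.findGreatest_is_greatest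
      (P := fun m => ¬ (Vflag B b ⊓ Sflag σ m ≤ Vflag B (b + 1))) (n := N - 1) hm h hc
  · have hbot : Sflag (F := F) σ m = ⊥ := Sflag_eq_bot (by omega)
    rw [hbot, inf_bot_eq]
    exact bot_le

lemma mrel_inj_aux {B : Matrix (Fin N) (Fin N) F} (hB : IsUnit B) (σ : Equiv.Perm (Fin N))
    {b b' : ℕ} (hbb : b < b') (hb' : b' < N) (heq : mrel B σ b = mrel B σ b') : False := by
  have hb : b < N := hbb.trans hb'
  have hN : 0 < N := by omega
  set m := mrel B σ b with hm
  have hmN : m < N := mrel_lt B σ b hN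
  set r : ℕ → ℕ → ℕ := fun c m' => Module.finrank F ↥(Vflag B c ⊓ Sflag σ m') with hr
  -- strict drop and equality at b
  have hdrop : ∀ c : ℕ, c < N → mrel B σ c = m → r (c + 1) m < r c m := by
    intro c hc hmc
    have hspec := mrel_spec hB σ hc
    rw [hmc] at hspec
    have hlt : Vflag B (c + 1) ⊓ Sflag σ m < Vflag B c ⊓ Sflag σ m := by
      refine lt_of_le_of_ne (inf_le_inf_right _ (Vflag_anti (Nat.le_succ c))) fun hcontra => ?_
      exact hspec (hcontra ▸ inf_le_left)
    exact Submodule.finrank_lt_finrank_of_lt hlt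
  have heqnext : ∀ c : ℕ, c < N → mrel B σ c = m → r c (m + 1) = r (c + 1) (m + 1) := by
    intro c hc hmc
    have hle : Vflag B c ⊓ Sflag σ (m + 1) ≤ Vflag B (c + 1) := by
      apply mrel_max σ
      omega
    have heq2 : Vflag B c ⊓ Sflag σ (m + 1) = Vflag B (c + 1) ⊓ Sflag σ (m + 1) :=
      le_antisymm (le_inf hle inf_le_right)
        (inf_le_inf_right _ (Vflag_anti (Nat.le_succ c)))
    simp only [hr]
    rw [heq2]
  -- the defect function
  set d : ℕ → ℤ := fun c => (r c m : ℤ) - r c (m + 1) with hd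
  have hd0 : ∀ c, 0 ≤ d c := by
    intro c
    have : r c (m + 1) ≤ r c m :=
      Submodule.finrank_mono (inf_le_inf_left _ (Sflag_anti (Nat.le_succ m)))
    simp only [hd, hr, sub_nonneg]
    exact_mod_cast this
  have hd1 : ∀ c, d c ≤ 1 := by
    intro c
    have hstep : Sflag (F := F) σ (m + 1) =
        Sflag σ m ⊓ LinearMap.ker (LinearMap.proj (σ ⟨m, hmN⟩) : (Fin N → F) →ₗ[F] F) :=
      Sflag_succ hmN
    have : r c m ≤ r c (m + 1) + 1 := by
      have hrw : Vflag B c ⊓ Sflag σ (m + 1) =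
          (Vflag B c ⊓ Sflag σ m) ⊓
            LinearMap.ker (LinearMap.proj (σ ⟨m, hmN⟩) : (Fin N → F) →ₗ[F] F) := by
        rw [hstep, inf_assoc]
      have := finrank_le_inf_ker_add_one (Vflag B c ⊓ Sflag σ m)
        (LinearMap.proj (σ ⟨m, hmN⟩) : (Fin N → F) →ₗ[F] F)
      rw [← hrw] at this
      exact this
    simp only [hd, hr] at this ⊢
    omega
  have hanti : ∀ c, d (c + 1) ≤ d c := by
    intro c
    have := finrank_inf_supermod (F := F) (Vflag_anti (Nat.le_succ c) : Vflag B (c+1) ≤ Vflag B c)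
      (Sflag_anti (Nat.le_succ m) : Sflag (F := F) σ (m+1) ≤ Sflag σ m)
    simp only [hd, hr]
    omega
  have hchain : ∀ t : ℕ, d (b + 1 + t) ≤ d (b + 1) := by
    intro t
    induction t with
    | zero => exact le_rfl
    | succ t ih => exact le_trans (by rw [← Nat.add_assoc]; exact hanti (b + 1 + t)) ih
  -- at b : d (b+1) ≤ 0
  have hdb1 : d (b + 1) ≤ 0 := by
    have h1 := hdrop b hb rfl
    have h2 := heqnext b hb rfl
    have h3 := hd1 b
    simp only [hd, hr] at h1 h2 h3 ⊢
    omega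
  -- at b' : d b' ≥ 1
  have hdb' : 1 ≤ d b' := by
    have h1 := hdrop b' hb' heq.symm
    have h2 := heqnext b' hb' heq.symm
    have h3 := hd0 (b' + 1)
    simp only [hd, hr] at h1 h2 h3 ⊢
    omega
  have : d b' ≤ d (b + 1) := by
    have := hchain (b' - (b + 1))
    rwa [Nat.add_sub_cancel' (by omega : b + 1 ≤ b')] at this
  omega

lemma mrel_inj {B : Matrix (Fin N) (Fin N) F} (hB : IsUnit B) (σ : Equiv.Perm (Fin N))
    {b b' : ℕ} (hb : b < N) (hb' : b' < N) (heq : mrel B σ b = mrel B σ b') : b = b' := by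
  by_contra hne
  rcases lt_or_gt_of_ne hne with h | h
  · exact mrel_inj_aux hB σ h hb' heq
  · exact mrel_inj_aux hB σ h hb heq.symm

end FlagLemmas

/-! ### Evaluation of restricted tensors against flag vectors -/

section EvalLemmas

variable {F : Type*} [Field F] {n : Fin k → ℕ}

lemma prod_sum_pi {M : Type*} [CommSemiring M] (f : ∀ i, Fin (n i) → M) :
    ∑ β : ∀ i, Fin (n i), ∏ i, f i (β i) = ∏ i, ∑ b, f i b := by
  rw [Finset.prod_univ_sum]
  rw [Fintype.piFinset_univ]

lemma restrictBy_comp (Am Bm : ∀ i, Matrix (Fin (n i)) (Fin (n i)) F)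
    (f : Tensor F fun i => Fin (n i)) :
    restrictBy Bm (restrictBy Am f) = restrictBy (fun i => Am i * Bm i) f := by
  funext γ
  unfold restrictBy
  calc ∑ δ : ∀ i, Fin (n i), (∏ i, Bm i (δ i) (γ i)) *
          ∑ α : ∀ i, Fin (n i), (∏ i, Am i (α i) (δ i)) * f α
      = ∑ δ : ∀ i, Fin (n i), ∑ α : ∀ i, Fin (n i),
          (∏ i, Am i (α i) (δ i) * Bm i (δ i) (γ i)) * f α := by
        refine Finset.sum_congr rfl fun δ _ => ?_
        rw [Finset.mul_sum]
        refine Finset.sum_congr rfl fun α _ => ?_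
        rw [← mul_assoc, Finset.prod_mul_distrib]
        ring
    _ = ∑ α : ∀ i, Fin (n i), ∑ δ : ∀ i, Fin (n i),
          (∏ i, Am i (α i) (δ i) * Bm i (δ i) (γ i)) * f α := Finset.sum_comm
    _ = ∑ α : ∀ i, Fin (n i), (∏ i, (Am i * Bm i) (α i) (γ i)) * f α := by
        refine Finset.sum_congr rfl fun α _ => ?_
        rw [← Finset.sum_mul]
        congr 1
        rw [prod_sum_pi (fun i d => Am i (α i) d * Bm i d (γ i))]
        exact Finset.prod_congr rfl fun i _ => (Matrix.mul_apply).symm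

lemma eval_expand (A : ∀ i, Matrix (Fin (n i)) (Fin (n i)) F)
    (g : Tensor F fun i => Fin (n i)) (x : ∀ i, Fin (n i) → F) :
    ∑ β : ∀ i, Fin (n i), (∏ i, x i (β i)) * restrictBy A g β
      = ∑ α : ∀ i, Fin (n i), (∏ i, (A i).mulVec (x i) (α i)) * g α := by
  unfold restrictBy
  calc ∑ β : ∀ i, Fin (n i), (∏ i, x i (β i)) *
          ∑ α : ∀ i, Fin (n i), (∏ i, A i (α i) (β i)) * g α
      = ∑ β : ∀ i, Fin (n i), ∑ α : ∀ i, Fin (n i),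
          (∏ i, x i (β i) * A i (α i) (β i)) * g α := by
        refine Finset.sum_congr rfl fun β _ => ?_
        rw [Finset.mul_sum]
        refine Finset.sum_congr rfl fun α _ => ?_
        rw [← mul_assoc, Finset.prod_mul_distrib]
    _ = ∑ α : ∀ i, Fin (n i), ∑ β : ∀ i, Fin (n i),
          (∏ i, x i (β i) * A i (α i) (β i)) * g α := Finset.sum_comm
    _ = ∑ α : ∀ i, Fin (n i), (∏ i, (A i).mulVec (x i) (α i)) * g α := by
        refine Finset.sum_congr rfl fun α _ => ?_
        rw [← Finset.sum_mul]
        congr 1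
        rw [prod_sum_pi (fun i b => x i b * A i (α i) b)]
        refine Finset.prod_congr rfl fun i _ => ?_
        rw [Matrix.mulVec, dotProduct]
        exact Finset.sum_congr rfl fun b _ => mul_comm _ _

lemma eval_maxpt (A : ∀ i, Matrix (Fin (n i)) (Fin (n i)) F)
    (g : Tensor F fun i => Fin (n i)) {β₀ : ∀ i, Fin (n i)}
    (hβ₀ : β₀ ∈ maxPoints (supp g)) (x : ∀ i, Fin (n i) → F)
    (h1 : ∀ i, ∀ c : Fin (n i), (c : ℕ) < (β₀ i : ℕ) → (A i).mulVec (x i) c = 0) :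
    ∑ α : ∀ i, Fin (n i), (∏ i, (A i).mulVec (x i) (α i)) * g α
      = (∏ i, (A i).mulVec (x i) (β₀ i)) * g β₀ := by
  refine Finset.sum_eq_single β₀ ?_ (fun h => absurd (Finset.mem_univ _) h)
  intro α _ hne
  by_cases hlt : ∀ i, (β₀ i : ℕ) ≤ (α i : ℕ)
  · have hle : β₀ ≤ α := fun i => Fin.le_def.2 (hlt i)
    have hltp : β₀ < α := lt_of_le_of_ne hle (Ne.symm hne)
    have hns : α ∉ supp g := fun hs => hβ₀.2 α hs hltp
    have hg : g α = 0 := not_not.1 hns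
    rw [hg, mul_zero]
  · push_neg at hlt
    obtain ⟨i, hi⟩ := hlt
    have h0 : (A i).mulVec (x i) (α i) = 0 := h1 i (α i) hi
    rw [Finset.prod_eq_zero (Finset.mem_univ i) h0, zero_mul]

lemma exists_witness (A : ∀ i, Matrix (Fin (n i)) (Fin (n i)) F)
    (g : Tensor F fun i => Fin (n i)) {β₀ : ∀ i, Fin (n i)}
    (hβ₀ : β₀ ∈ maxPoints (supp g)) (σs : ∀ i, Equiv.Perm (Fin (n i))) (mm : ∀ i, ℕ)
    (hx : ∀ i, ∃ x, x ∈ Vflag (A i) (β₀ i : ℕ) ⊓ Sflag (σs i) (mm i) ∧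
      x ∉ Vflag (A i) ((β₀ i : ℕ) + 1)) :
    ∃ γ : ∀ i, Fin (n i), restrictBy A g γ ≠ 0 ∧
      ∀ i, mm i ≤ (((σs i).symm (γ i) : ℕ)) := by
  choose x hxm hxn using hx
  have h1 : ∀ i, ∀ c : Fin (n i), (c : ℕ) < (β₀ i : ℕ) → (A i).mulVec (x i) c = 0 := fun i =>
    mem_Vflag.1 (Submodule.mem_inf.1 (hxm i)).1
  have h2 : ∀ i, (A i).mulVec (x i) (β₀ i) ≠ 0 := by
    intro i
    have hnot := hxn i
    rw [mem_Vflag] at hnot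
    push_neg at hnot
    obtain ⟨c, hc, hcne⟩ := hnot
    have hceq : c = β₀ i := by
      by_contra hne
      have hcv : (c : ℕ) ≠ (β₀ i : ℕ) := fun h => hne (Fin.ext h)
      exact hcne (h1 i c (by omega))
    rwa [hceq] at hcne
  have hgβ : g β₀ ≠ 0 := hβ₀.1
  have hsum : ∑ β : ∀ i, Fin (n i), (∏ i, x i (β i)) * restrictBy A g β ≠ 0 := by
    rw [eval_expand, eval_maxpt A g hβ₀ x h1]
    exact mul_ne_zero (Finset.prod_ne_zero_iff.2 fun i _ => h2 i) hgβ
  obtain ⟨γ, _, hγ⟩ := Finset.exists_ne_zero_of_sum_ne_zero hsum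
  refine ⟨γ, fun h0 => hγ (by rw [h0, mul_zero]), fun i => ?_⟩
  by_contra hc
  push_neg at hc
  have hxS : x i ∈ Sflag (σs i) (mm i) := (Submodule.mem_inf.1 (hxm i)).2
  have hz := mem_Sflag.1 hxS ((σs i).symm (γ i)) hc
  rw [Equiv.apply_symm_apply] at hz
  exact hγ (by rw [Finset.prod_eq_zero (Finset.mem_univ i) hz, zero_mul])

end EvalLemmas

/-! ### The entropy maximizer and the KKT inequality -/

section Maximizer

variable {I : Fin k → Type*} [∀ i, Fintype (I i)] [∀ i, DecidableEq (I i)]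

/-- The natural-log weighted entropy functional. -/
noncomputable def PhiN (θ : Fin k → ℝ) (Q : (∀ i, I i) → ℝ) : ℝ := ∑ i, θ i * HN (marg Q i)

lemma Hw_eq_PhiN (θ : Fin k → ℝ) (Q : (∀ i, I i) → ℝ) :
    Hw θ Q = PhiN θ Q / Real.log 2 := by
  rw [Hw_eq_HN]
  rfl

lemma continuous_PhiN (θ : Fin k → ℝ) : Continuous (PhiN (I := I) θ) := by
  unfold PhiN
  refine continuous_finset_sum _ fun i _ => continuous_const.mul ?_
  unfold HN
  refine continuous_finset_sum _ fun b _ => ?_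
  refine Real.continuous_negMulLog.comp ?_
  unfold marg
  refine continuous_finset_sum _ fun α _ => ?_
  by_cases h : α i = b
  · simpa [h] using continuous_apply α
  · simpa [h] using (continuous_const : Continuous fun _ : (∀ i, I i) → ℝ => (0:ℝ))

lemma exists_maximizer (θ : Fin k → ℝ) (Ψ : Set (∀ i, I i)) (γ₀ : ∀ i, I i) (hγ₀ : γ₀ ∈ Ψ) :
    ∃ Q : (∀ i, I i) → ℝ, (IsProbDist Q ∧ ∀ α, Q α ≠ 0 → α ∈ Ψ) ∧
      ∀ Q' : (∀ i, I i) → ℝ, IsProbDist Q' → (∀ α, Q' α ≠ 0 → α ∈ Ψ) →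
        PhiN θ Q' ≤ PhiN θ Q := by
  classical
  set K : Set ((∀ i, I i) → ℝ) := {Q | IsProbDist Q ∧ ∀ α, Q α ≠ 0 → α ∈ Ψ} with hK
  have hKeq : K = stdSimplex ℝ (∀ i, I i) ∩ {Q | ∀ α, α ∉ Ψ → Q α = 0} := by
    ext Q
    simp only [hK, Set.mem_setOf_eq, Set.mem_inter_iff, stdSimplex, IsProbDist]
    constructor
    · rintro ⟨h1, h2⟩
      exact ⟨h1, fun α hα => by_contra fun h0 => hα (h2 α h0)⟩
    · rintro ⟨h1, h2⟩
      exact ⟨h1, fun α h0 => by_contra fun hα => h0 (h2 α hα)⟩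
  have hclosed : IsClosed {Q : (∀ i, I i) → ℝ | ∀ α, α ∉ Ψ → Q α = 0} := by
    have hrw : {Q : (∀ i, I i) → ℝ | ∀ α, α ∉ Ψ → Q α = 0}
        = ⋂ (α : ∀ i, I i) (_ : α ∉ Ψ), {Q : (∀ i, I i) → ℝ | Q α = 0} := by
      ext Q; simp
    rw [hrw]
    exact isClosed_iInter fun α => isClosed_iInter fun _ =>
      isClosed_eq (continuous_apply α) continuous_const
  have hKcompact : IsCompact K := by
    rw [hKeq]
    exact (isCompact_stdSimplex ℝ (∀ i, I i)).inter_right hclosed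
  have hKne : K.Nonempty := by
    refine ⟨fun α => if α = γ₀ then 1 else 0, ⟨⟨fun α => ?_, ?_⟩, fun α hα => ?_⟩⟩
    · by_cases h : α = γ₀ <;> simp [h]
    · rw [Finset.sum_ite_eq' Finset.univ γ₀ (fun _ => (1:ℝ))]
      simp
    · by_cases h : α = γ₀
      · rw [h]; exact hγ₀
      · simp [h] at hα
  obtain ⟨Q, hQK, hQmax⟩ := hKcompact.exists_isMaxOn hKne (continuous_PhiN θ).continuousOn
  exact ⟨Q, hQK, fun Q' h1 h2 => hQmax ⟨h1, h2⟩⟩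

lemma maximizer_props (θ : Fin k → ℝ) (hθ0 : ∀ i, 0 ≤ θ i) (Ψ : Set (∀ i, I i))
    (Q : (∀ i, I i) → ℝ) (hQ : IsProbDist Q) (hQs : ∀ α, Q α ≠ 0 → α ∈ Ψ)
    (hmax : ∀ Q' : (∀ i, I i) → ℝ, IsProbDist Q' → (∀ α, Q' α ≠ 0 → α ∈ Ψ) →
      PhiN θ Q' ≤ PhiN θ Q)
    {γ : ∀ i, I i} (hγ : γ ∈ Ψ) :
    (∀ i, θ i ≠ 0 → 0 < marg Q i (γ i)) ∧
      ∑ i, θ i * (-Real.log (marg Q i (γ i))) ≤ PhiN θ Q := by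
  classical
  -- the mixed distribution
  have hkey : ∀ σ : ℝ, 0 < σ → σ < 1 →
      ∑ i, θ i * (-Real.log ((1 - σ) * marg Q i (γ i) + σ)) ≤ PhiN θ Q := by
    intro σ hσ0 hσ1
    set Qσ : (∀ i, I i) → ℝ := fun α => (1 - σ) * Q α + σ * (if α = γ then 1 else 0) with hQσ
    have hQσprob : IsProbDist Qσ := by
      constructor
      · intro α
        have := hQ.1 α
        dsimp [Qσ]
        split <;> nlinarith
      · dsimp [Qσ]
        rw [Finset.sum_add_distrib, ← Finset.mul_sum, ← Finset.mul_sum, hQ.2,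
          Finset.sum_ite_eq' Finset.univ γ (fun _ => (1:ℝ))]
        simp
    have hQσsupp : ∀ α, Qσ α ≠ 0 → α ∈ Ψ := by
      intro α hα
      by_cases h : α = γ
      · rw [h]; exact hγ
      · refine hQs α fun h0 => hα ?_
        dsimp [Qσ]
        rw [h0]
        simp [h]
    have hmarg : ∀ i, marg Qσ i = fun b => (1 - σ) * marg Q i b
        + σ * (if γ i = b then 1 else 0) := by
      intro i
      funext b
      rw [hQσ, marg_mix (1 - σ) σ i b, marg_point γ i b]
    have hmix : ∀ i, (1 - σ) * HN (marg Q i) + σ * (-Real.log ((1 - σ) * marg Q i (γ i) + σ))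
        ≤ HN (marg Qσ i) := by
      intro i
      rw [hmarg i]
      exact mix_HN (marg_nonneg hQ.1 i) (marg_isProbDist hQ i).2 (γ i) hσ0 hσ1
    have hsum : (1 - σ) * PhiN θ Q
        + σ * ∑ i, θ i * (-Real.log ((1 - σ) * marg Q i (γ i) + σ)) ≤ PhiN θ Qσ := by
      unfold PhiN
      rw [Finset.mul_sum, Finset.mul_sum, ← Finset.sum_add_distrib]
      refine Finset.sum_le_sum fun i _ => ?_
      have := mul_le_mul_of_nonneg_left (hmix i) (hθ0 i)
      nlinarith [this]
    have hle := hmax Qσ hQσprob hQσsupp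
    have hfin : σ * ∑ i, θ i * (-Real.log ((1 - σ) * marg Q i (γ i) + σ)) ≤ σ * PhiN θ Q := by
      nlinarith [hsum, hle]
    exact le_of_mul_le_mul_left hfin hσ0
  -- positivity
  have hpos : ∀ i, θ i ≠ 0 → 0 < marg Q i (γ i) := by
    intro i hθi
    rcases lt_or_eq_of_le (marg_nonneg hQ.1 i (γ i)) with h | h
    · exact h
    · exfalso
      have hθipos : 0 < θ i := lt_of_le_of_ne (hθ0 i) (Ne.symm hθi)
      set P0 := PhiN θ Q with hP0
      set σ₀ : ℝ := min (1/2) (Real.exp (-(P0 + 1) / θ i)) with hσ₀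
      have hσ₀0 : 0 < σ₀ := lt_min (by norm_num) (Real.exp_pos _)
      have hσ₀1 : σ₀ < 1 := lt_of_le_of_lt (min_le_left _ _) (by norm_num)
      have hterm : ∀ j, 0 ≤ θ j * (-Real.log ((1 - σ₀) * marg Q j (γ j) + σ₀)) := by
        intro j
        refine mul_nonneg (hθ0 j) ?_
        rw [neg_nonneg]
        apply Real.log_nonpos
        · have := marg_nonneg hQ.1 j (γ j)
          nlinarith
        · have := marg_le_one hQ j (γ j)
          nlinarith
      have htermi : P0 + 1 ≤ θ i * (-Real.log ((1 - σ₀) * marg Q i (γ i) + σ₀)) := by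
        rw [← h, mul_zero, zero_add]
        have hlog : Real.log σ₀ ≤ -(P0 + 1) / θ i := by
          calc Real.log σ₀ ≤ Real.log (Real.exp (-(P0 + 1) / θ i)) :=
                Real.log_le_log hσ₀0 (min_le_right _ _)
            _ = -(P0 + 1) / θ i := Real.log_exp _
        have : (P0 + 1) / θ i ≤ -Real.log σ₀ := by
          rw [neg_div] at hlog
          linarith
        calc P0 + 1 = θ i * ((P0 + 1) / θ i) := by field_simp
          _ ≤ θ i * (-Real.log σ₀) := mul_le_mul_of_nonneg_left this (hθ0 i)
      have hsum := hkey σ₀ hσ₀0 hσ₀1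
      have hbig : P0 + 1 ≤ ∑ j, θ j * (-Real.log ((1 - σ₀) * marg Q j (γ j) + σ₀)) :=
        le_trans htermi (Finset.single_le_sum (fun j _ => hterm j) (Finset.mem_univ i))
      linarith
  refine ⟨hpos, ?_⟩
  -- the limit σ → 0⁺
  have hstep : ∀ σ : ℝ, σ ∈ Set.Ioo (0:ℝ) 1 →
      ∑ i, θ i * (-Real.log (marg Q i (γ i) + σ)) ≤ PhiN θ Q := by
    intro σ hσ
    refine le_trans (Finset.sum_le_sum fun i _ => ?_) (hkey σ hσ.1 hσ.2)
    refine mul_le_mul_of_nonneg_left ?_ (hθ0 i)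
    rw [neg_le_neg_iff]
    apply Real.log_le_log
    · have := marg_nonneg hQ.1 i (γ i)
      nlinarith [hσ.1, hσ.2]
    · have := marg_nonneg hQ.1 i (γ i)
      nlinarith [hσ.1, hσ.2]
  have htend : Filter.Tendsto (fun σ : ℝ => ∑ i, θ i * (-Real.log (marg Q i (γ i) + σ)))
      (nhdsWithin 0 (Set.Ioi 0)) (nhds (∑ i, θ i * (-Real.log (marg Q i (γ i))))) := by
    apply tendsto_finset_sum
    intro i _
    by_cases hθi : θ i = 0
    · simp only [hθi, zero_mul]
      exact tendsto_const_nhds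
    · have hRpos : 0 < marg Q i (γ i) := hpos i hθi
      have h1 : Filter.Tendsto (fun σ : ℝ => marg Q i (γ i) + σ)
          (nhdsWithin 0 (Set.Ioi 0)) (nhds (marg Q i (γ i))) := by
        have h0 : Continuous (fun σ : ℝ => marg Q i (γ i) + σ) :=
          continuous_const.add continuous_id
        have := h0.tendsto (0:ℝ)
        rw [add_zero] at this
        exact this.mono_left nhdsWithin_le_nhds
      have h2 : Filter.Tendsto (fun σ : ℝ => Real.log (marg Q i (γ i) + σ))
          (nhdsWithin 0 (Set.Ioi 0)) (nhds (Real.log (marg Q i (γ i)))) :=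
        ((Real.continuousAt_log hRpos.ne').tendsto.comp h1)
      exact (h2.neg).const_mul (θ i)
  refine le_of_tendsto htend ?_
  filter_upwards [Ioo_mem_nhdsGT (zero_lt_one)] with σ hσ using hstep σ hσ

end Maximizer

/-! ### The core inequality -/

section Core

variable {F : Type*} [Field F] {n : Fin k → ℕ}

lemma core_ineq (θ : Fin k → ℝ) (hθ : IsProbDist θ)
    (g : Tensor F fun i => Fin (n i)) (A : ∀ i, Matrix (Fin (n i)) (Fin (n i)) F)
    (hA : ∀ i, IsUnit (A i)) (P : (∀ i, Fin (n i)) → ℝ) (hP : IsProbDist P)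
    (hPM : ∀ α, P α ≠ 0 → α ∈ maxPoints (supp g)) :
    Hw θ P ≤ HwSet θ (supp (restrictBy A g)) := by
  classical
  set t := restrictBy A g with ht
  have hPne : ∃ β, P β ≠ 0 := by
    by_contra hc
    push_neg at hc
    have h1 : (1:ℝ) = 0 := by rw [← hP.2]; exact Finset.sum_eq_zero fun β _ => hc β
    norm_num at h1
  obtain ⟨β₁, hβ₁⟩ := hPne
  have hβ₁M : β₁ ∈ maxPoints (supp g) := hPM β₁ hβ₁
  have hn : ∀ i, 0 < n i := fun i => (β₁ i).pos
  -- supp t is nonempty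
  have hx0 : ∀ i, ∃ x, x ∈ Vflag (A i) ((β₁ i : ℕ)) ⊓ Sflag (1 : Equiv.Perm (Fin (n i))) 0 ∧
      x ∉ Vflag (A i) ((β₁ i : ℕ) + 1) := by
    intro i
    obtain ⟨x, hx1, hx2⟩ := exists_Vflag_notin (hA i) (β₁ i).isLt
    exact ⟨x, Submodule.mem_inf.2 ⟨hx1, by rw [Sflag_zero]; exact Submodule.mem_top⟩, hx2⟩
  obtain ⟨γ₀, hγ₀, -⟩ := exists_witness A g hβ₁M (fun i => 1) (fun _ => 0) hx0
  -- the entropy maximizer over supp t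
  obtain ⟨Q, ⟨hQprob, hQsupp⟩, hQmax⟩ := exists_maximizer θ (supp t) γ₀ hγ₀
  -- sorting permutations: marg Q i is antitone along σs i
  set σs : ∀ i, Equiv.Perm (Fin (n i)) := fun i => Tuple.sort (fun c => -(marg Q i c)) with hσs
  have hanti : ∀ i, ∀ j j' : Fin (n i), j ≤ j' → marg Q i (σs i j') ≤ marg Q i (σs i j) := by
    intro i j j' hle
    have hmono := Tuple.monotone_sort (fun c => -(marg Q i c)) hle
    simp only [Function.comp_apply] at hmono
    simp only [hσs]
    linarith
  have hmp : ∀ γ : ∀ i, Fin (n i), γ ∈ supp t →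
      (∀ i, θ i ≠ 0 → 0 < marg Q i (γ i)) ∧
        ∑ i, θ i * (-Real.log (marg Q i (γ i))) ≤ PhiN θ Q :=
    fun γ hγ => maximizer_props θ hθ.1 (supp t) Q hQprob hQsupp hQmax hγ
  -- the reference subprobability weights
  set u : ∀ i, Fin (n i) → Fin (n i) := fun i b =>
    σs i ⟨mrel (A i) (σs i) (b : ℕ), mrel_lt (A i) (σs i) (b : ℕ) (hn i)⟩ with hu
  set q' : ∀ i, Fin (n i) → ℝ := fun i b => marg Q i (u i b) with hq'
  -- witnesses for maximal points
  have hwit : ∀ β : ∀ i, Fin (n i), β ∈ maxPoints (supp g) →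
      ∃ γ, γ ∈ supp t ∧ ∀ i, marg Q i (γ i) ≤ q' i (β i) := by
    intro β hβ
    have hx : ∀ i, ∃ x, x ∈ Vflag (A i) ((β i : ℕ)) ⊓ Sflag (σs i) (mrel (A i) (σs i) (β i : ℕ)) ∧
        x ∉ Vflag (A i) ((β i : ℕ) + 1) := by
      intro i
      have hspec := mrel_spec (hA i) (σs i) (β i).isLt
      rw [SetLike.not_le_iff_exists] at hspec
      exact hspec
    obtain ⟨γ, hγt, hγm⟩ := exists_witness A g hβ σs (fun i => mrel (A i) (σs i) (β i : ℕ)) hx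
    refine ⟨γ, hγt, fun i => ?_⟩
    have hrank := hγm i
    have hle : (⟨mrel (A i) (σs i) (β i : ℕ), mrel_lt (A i) (σs i) (β i : ℕ) (hn i)⟩ :
        Fin (n i)) ≤ (σs i).symm (γ i) := by
      rw [Fin.le_def]
      exact hrank
    have := hanti i _ _ hle
    rw [Equiv.apply_symm_apply] at this
    exact this
  -- q' sums to at most 1
  have hq'sum : ∀ i, ∑ b, q' i b ≤ 1 := by
    intro i
    have hinj : ∀ b ∈ Finset.univ, ∀ b' ∈ Finset.univ, u i b = u i b' → b = b' := by
      intro b _ b' _ hbb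
      have h1 := (Equiv.injective (σs i)) hbb
      have hval : mrel (A i) (σs i) (b : ℕ) = mrel (A i) (σs i) (b' : ℕ) := by
        simpa using congrArg Fin.val h1
      exact Fin.ext (mrel_inj (hA i) (σs i) b.isLt b'.isLt hval)
    have himg : ∑ b ∈ Finset.univ.image (u i), marg Q i b = ∑ b, marg Q i (u i b) :=
      Finset.sum_image hinj
    have hsub : ∑ b ∈ Finset.univ.image (u i), marg Q i b ≤ ∑ b, marg Q i b :=
      Finset.sum_le_sum_of_subset_of_nonneg (Finset.subset_univ _)
        (fun b _ _ => marg_nonneg hQprob.1 i b)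
    have hgoal : ∑ b, marg Q i (u i b) ≤ 1 := by
      rw [← himg]
      exact le_trans hsub (le_of_eq (marg_isProbDist hQprob i).2)
    simpa only [hq'] using hgoal
  -- per-coordinate Gibbs bound
  have hGibbs : ∀ i, θ i ≠ 0 → HN (marg P i) ≤ ∑ b, marg P i b * (-Real.log (q' i b)) := by
    intro i hθi
    refine gibbs_ineq (marg_nonneg hP.1 i) (marg_isProbDist hP i).2
      (fun b => marg_nonneg hQprob.1 i _) (hq'sum i) ?_
    intro b hb
    obtain ⟨β, hPβ, hβi⟩ := marg_ne_zero hb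
    obtain ⟨γ, hγt, hγle⟩ := hwit β (hPM β hPβ)
    have hpos := (hmp γ hγt).1 i hθi
    have hle := hγle i
    rw [hβi] at hle
    linarith
  -- assemble the main inequality
  have hmain : PhiN θ P ≤ PhiN θ Q := by
    have hstep1 : PhiN θ P ≤ ∑ i, θ i * ∑ b, marg P i b * (-Real.log (q' i b)) := by
      unfold PhiN
      refine Finset.sum_le_sum fun i _ => ?_
      by_cases hθi : θ i = 0
      · rw [hθi, zero_mul, zero_mul]
      · exact mul_le_mul_of_nonneg_left (hGibbs i hθi) (hθ.1 i)
    have hstep2 : ∑ i, θ i * ∑ b, marg P i b * (-Real.log (q' i b))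
        = ∑ β, P β * ∑ i, θ i * (-Real.log (q' i (β i))) := by
      calc ∑ i, θ i * ∑ b, marg P i b * (-Real.log (q' i b))
          = ∑ i, θ i * ∑ β, P β * (-Real.log (q' i (β i))) := by
            refine Finset.sum_congr rfl fun i _ => ?_
            rw [marg_weight (I := fun i => Fin (n i)) (P := P) i
              (fun b => -Real.log (q' i b))]
        _ = ∑ i, ∑ β, P β * (θ i * (-Real.log (q' i (β i)))) := by
            refine Finset.sum_congr rfl fun i _ => ?_
            rw [Finset.mul_sum]
            exact Finset.sum_congr rfl fun β _ => by ring
        _ = ∑ β, ∑ i, P β * (θ i * (-Real.log (q' i (β i)))) := Finset.sum_comm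
        _ = ∑ β, P β * ∑ i, θ i * (-Real.log (q' i (β i))) := by
            refine Finset.sum_congr rfl fun β _ => ?_
            rw [Finset.mul_sum]
    have hstep3 : ∑ β, P β * ∑ i, θ i * (-Real.log (q' i (β i))) ≤ PhiN θ Q := by
      calc ∑ β, P β * ∑ i, θ i * (-Real.log (q' i (β i)))
          ≤ ∑ β, P β * PhiN θ Q := by
            refine Finset.sum_le_sum fun β _ => ?_
            rcases eq_or_ne (P β) 0 with h0 | h0
            · rw [h0, zero_mul, zero_mul]
            · refine mul_le_mul_of_nonneg_left ?_ (hP.1 β)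
              obtain ⟨γ, hγt, hγle⟩ := hwit β (hPM β h0)
              have hkkt := (hmp γ hγt).2
              refine le_trans (Finset.sum_le_sum fun i _ => ?_) hkkt
              by_cases hθi : θ i = 0
              · rw [hθi, zero_mul, zero_mul]
              · refine mul_le_mul_of_nonneg_left ?_ (hθ.1 i)
                rw [neg_le_neg_iff]
                exact Real.log_le_log ((hmp γ hγt).1 i hθi) (hγle i)
          _ = PhiN θ Q := by rw [← Finset.sum_mul, hP.2, one_mul]
    calc PhiN θ P ≤ _ := hstep1
      _ = _ := hstep2
      _ ≤ _ := hstep3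
  -- conclude
  have hlog2 : 0 < Real.log 2 := Real.log_pos (by norm_num)
  rw [Hw_eq_PhiN]
  have hQle : PhiN θ P / Real.log 2 ≤ Hw θ Q := by
    rw [Hw_eq_PhiN]
    exact (div_le_div_iff_of_pos_right hlog2).2 hmain
  refine le_trans hQle ?_
  refine le_csSup ?_ ⟨Q, hQprob, hQsupp, rfl⟩
  refine ⟨∑ i, θ i * ((Fintype.card (Fin (n i)) : ℝ) * (Real.exp 1)⁻¹ / Real.log 2), ?_⟩
  rintro x ⟨Q', hQ'prob, -, rfl⟩
  unfold Hw
  refine Finset.sum_le_sum fun i _ => ?_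
  refine mul_le_mul_of_nonneg_left ?_ (hθ.1 i)
  rw [H2_eq_HN]
  exact (div_le_div_iff_of_pos_right hlog2).2 (HN_le_card (marg_nonneg hQ'prob.1 i))

end Core

end Statement4Aux

/-- the upper support functional dominates the lower support functional. -/
theorem statement4 {k : ℕ} {F : Type*} [Field F] {n : Fin k → ℕ}
    (θ : Fin k → ℝ) (hθ : IsProbDist θ) (f : Tensor F fun i => Fin (n i)) :
    rhoLower θ f ≤ rhoUpper θ f := by
  classical
  have hupne : {h | ∃ B : ∀ i, Matrix (Fin (n i)) (Fin (n i)) F, IsBasisTuple B ∧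
      h = HwSet θ (supp (restrictBy B f))}.Nonempty :=
    ⟨HwSet θ (supp (restrictBy (fun _ => (1 : Matrix _ _ F)) f)),
      fun _ => (1 : Matrix _ _ F), fun _ => isUnit_one, rfl⟩
  have hup0 : 0 ≤ rhoUpper θ f := by
    refine le_csInf hupne ?_
    rintro h' ⟨B, hB, rfl⟩
    refine Real.sSup_nonneg ?_
    rintro x ⟨Q, hQ, -, rfl⟩
    exact Hw_nonneg hθ.1 hQ
  refine Real.sSup_le ?_ hup0
  rintro h ⟨C, hC, rfl⟩
  refine Real.sSup_le ?_ hup0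
  rintro x ⟨P, hP, hPsupp, rfl⟩
  refine le_csInf hupne ?_
  rintro h' ⟨B, hB, rfl⟩
  have hAunit : ∀ i, IsUnit ((C i)⁻¹ * B i) := fun i =>
    ((Matrix.isUnit_nonsing_inv_iff).2 (hC i)).mul (hB i)
  have hmat : (fun i => C i * ((C i)⁻¹ * B i)) = B := by
    funext i
    rw [← mul_assoc, Matrix.mul_nonsing_inv _ ((Matrix.isUnit_iff_isUnit_det _).1 (hC i)),
      one_mul]
  have hcomp : restrictBy (fun i => (C i)⁻¹ * B i) (restrictBy C f) = restrictBy B f := by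
    rw [restrictBy_comp, hmat]
  rw [← hcomp]
  exact core_ineq θ hθ (restrictBy C f) _ hAunit P hP hPsupp

end CVZ

end
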